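/- arXiv:1403.1274 — 2 statements merged into one kernel-verified Lean document; each statement's English description precedes it below -/
import Mathlib

section
/- Let ξ be an integer-valued random variable with ξ ≥ 1 almost surely, let α ∈ (0,1), and let ζ be distributed as Bin(ξ, α) (conditionally on ξ, ζ is binomial with ξ trials and success probability α). Assume α·E[ξ] > 1. Then the extinction probability q of a Galton–Watson process with offspring distribution ζ satisfies q ≤ (1-α) / (1 - E[(1-α)^ξ] - E[ξ α (1-α)^{ξ-1}]). -/
open MeasureTheory Set

/-!
Write `F x = E[(1 - α + α x)^ξ]` for the generating function of `ζ`, and `p₀`, `p₁`, `β` for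
`ℙ(ζ = 0)`, `ℙ(ζ = 1)`, `ℙ(ζ ≥ 2)`. Since `x^j ≤ x^2` for `j ≥ 2` and `x ∈ [0,1]`,
`F x ≤ p₀ + p₁ x + β x²`. At `B = (1 - α)/β` this quadratic equals
`B + (1 - B)(p₀ - (1 - α)) ≤ B`, because `ξ ≥ 1` gives `p₀ ≤ 1 - α`. So if `B < 1` then
`F B ≤ B` while `F 0 ≥ 0`, and the intermediate value theorem puts a fixed point in `[0, B]`.
Finally `β > 0`, for otherwise `ξ ≤ 1` almost surely and `α E[ξ] ≤ α < 1`.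
-/

/-- `ℙ(Bin(k, α) ≥ 2)`, as the complement of the outcomes `0` and `1`. -/
noncomputable def binomProbGeTwo (α : ℝ) (k : ℕ) : ℝ :=
  1 - (1 - α) ^ k - k * α * (1 - α) ^ (k - 1)

lemma binomProbGeTwo_succ (α : ℝ) (k : ℕ) :
    binomProbGeTwo α (k + 1) = binomProbGeTwo α k + k * α ^ 2 * (1 - α) ^ (k - 1) := by
  rcases k with _ | k
  · simp [binomProbGeTwo]
  · simp [binomProbGeTwo]; ring

section binomProbGeTwo

variable {α : ℝ}

lemma binomProbGeTwo_monotone (hα : α ≤ 1) : Monotone (binomProbGeTwo α) :=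
  monotone_nat_of_le_succ fun k => by
    rw [binomProbGeTwo_succ]
    exact le_add_of_nonneg_right (mul_nonneg (by positivity) (pow_nonneg (by linarith) _))

lemma binomProbGeTwo_nonneg (hα : α ≤ 1) (k : ℕ) : 0 ≤ binomProbGeTwo α k := by
  simpa [binomProbGeTwo] using binomProbGeTwo_monotone hα (Nat.zero_le k)

lemma sq_le_binomProbGeTwo (hα : α ≤ 1) {k : ℕ} (hk : 2 ≤ k) : α ^ 2 ≤ binomProbGeTwo α k := by
  have h2 : binomProbGeTwo α 2 = α ^ 2 := by simp [binomProbGeTwo]; ring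
  exact h2 ▸ binomProbGeTwo_monotone hα hk

lemma natCast_mul_mul_pow_pred_le_one (hα1 : α ≤ 1) (k : ℕ) :
    k * α * (1 - α) ^ (k - 1) ≤ 1 := by
  have := binomProbGeTwo_nonneg hα1 k
  have : 0 ≤ (1 - α) ^ k := pow_nonneg (by linarith) _
  unfold binomProbGeTwo at *
  linarith

lemma pow_le_binom_quadratic (hα0 : 0 ≤ α) (hα1 : α ≤ 1) {x : ℝ} (hx0 : 0 ≤ x) (hx1 : x ≤ 1)
    (k : ℕ) :
    (1 - α + α * x) ^ k
      ≤ (1 - α) ^ k + k * α * (1 - α) ^ (k - 1) * x + binomProbGeTwo α k * x ^ 2 := by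
  induction k with
  | zero => simp [binomProbGeTwo]
  | succ k ih =>
    have hgap : (1 - α) ^ (k + 1) + (k + 1 : ℕ) * α * (1 - α) ^ k * x
          + binomProbGeTwo α (k + 1) * x ^ 2
        - (1 - α + α * x) * ((1 - α) ^ k + k * α * (1 - α) ^ (k - 1) * x
          + binomProbGeTwo α k * x ^ 2)
        = α * binomProbGeTwo α k * x ^ 2 * (1 - x) := by
      rcases k with _ | k
      · simp [binomProbGeTwo]
      · simp [binomProbGeTwo]; ring
    have : 0 ≤ α * binomProbGeTwo α k * x ^ 2 * (1 - x) :=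
      mul_nonneg (by have := binomProbGeTwo_nonneg hα1 k; positivity) (by linarith)
    calc (1 - α + α * x) ^ (k + 1) = (1 - α + α * x) * (1 - α + α * x) ^ k := pow_succ' _ _
      _ ≤ (1 - α + α * x) * ((1 - α) ^ k + k * α * (1 - α) ^ (k - 1) * x
          + binomProbGeTwo α k * x ^ 2) := by gcongr
      _ ≤ _ := by simp only [Nat.add_sub_cancel]; linarith

end binomProbGeTwo

lemma sInf_fixedPoints_le_of_map_le {F : ℝ → ℝ} {b : ℝ} (hF : ContinuousOn F (Icc 0 1))
    (hF0 : 0 ≤ F 0) (hb0 : 0 ≤ b) (hb1 : b ≤ 1) (hb : F b ≤ b) :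
    sInf {x ∈ Icc (0 : ℝ) 1 | F x = x} ≤ b := by
  obtain ⟨c, hc, hFc⟩ : ∃ c ∈ Icc 0 b, F c - c = 0 :=
    intermediate_value_Icc' (f := fun x => F x - x) hb0
      ((hF.mono (Icc_subset_Icc_right hb1)).sub continuousOn_id) ⟨by linarith, by simpa using hF0⟩
  have hcS : c ∈ {x ∈ Icc (0 : ℝ) 1 | F x = x} := ⟨⟨hc.1, hc.2.trans hb1⟩, by linarith⟩
  exact (csInf_le ⟨0, fun x hx => hx.1.1⟩ hcS).trans hc.2

section NatRandomVariable

variable {Ω : Type*} [MeasurableSpace Ω] {μ : Measure Ω} {ξ : Ω → ℕ}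

lemma integrable_comp_of_abs_le [IsFiniteMeasure μ] (hξ : Measurable ξ) {f : ℕ → ℝ} {C : ℝ}
    (hf : ∀ n, |f n| ≤ C) : Integrable (fun ω => f (ξ ω)) μ :=
  .of_bound (measurable_from_top.comp hξ).aestronglyMeasurable C (ae_of_all _ fun ω => hf (ξ ω))

lemma integrable_pow_comp [IsFiniteMeasure μ] (hξ : Measurable ξ) {t : ℝ} (ht : |t| ≤ 1) :
    Integrable (fun ω => t ^ ξ ω) μ :=
  integrable_comp_of_abs_le hξ fun n => by simpa [abs_pow] using pow_le_one₀ (abs_nonneg t) ht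

lemma continuousOn_integral_pow [IsFiniteMeasure μ] (hξ : Measurable ξ) :
    ContinuousOn (fun t : ℝ => ∫ ω, t ^ ξ ω ∂μ) (Icc (-1) 1) :=
  continuousOn_of_dominated (bound := fun _ => 1)
    (fun _ _ => (measurable_from_top.comp hξ).aestronglyMeasurable)
    (fun t ht => ae_of_all _ fun ω => by
      simpa [abs_pow] using pow_le_one₀ (abs_nonneg t) (abs_le.mpr ht))
    (integrable_const 1) (ae_of_all _ fun ω => (continuous_pow (ξ ω)).continuousOn)

variable {α : ℝ}

lemma integrable_natCast_mul_mul_pow_pred [IsFiniteMeasure μ] (hξ : Measurable ξ)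
    (hα0 : 0 ≤ α) (hα1 : α ≤ 1) :
    Integrable (fun ω => (ξ ω : ℝ) * α * (1 - α) ^ (ξ ω - 1)) μ :=
  integrable_comp_of_abs_le (f := fun n : ℕ => (n : ℝ) * α * (1 - α) ^ (n - 1)) hξ fun n => by
    have : 0 ≤ (1 - α) ^ (n - 1) := pow_nonneg (by linarith) _
    rw [abs_of_nonneg (by positivity)]
    exact natCast_mul_mul_pow_pred_le_one hα1 n

lemma integrable_binomProbGeTwo [IsFiniteMeasure μ] (hξ : Measurable ξ) (hα0 : 0 ≤ α)
    (hα1 : α ≤ 1) : Integrable (fun ω => binomProbGeTwo α (ξ ω)) μ :=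
  ((integrable_const 1).sub (integrable_pow_comp hξ (abs_le.mpr ⟨by linarith, by linarith⟩))).sub
    (integrable_natCast_mul_mul_pow_pred hξ hα0 hα1)

variable [IsProbabilityMeasure μ]

lemma integral_pow_le_of_one_le (hξ : Measurable ξ) (hξ1 : ∀ᵐ ω ∂μ, 1 ≤ ξ ω) {t : ℝ}
    (ht0 : 0 ≤ t) (ht1 : t ≤ 1) : ∫ ω, t ^ ξ ω ∂μ ≤ t := by
  have hle : ∀ᵐ ω ∂μ, t ^ ξ ω ≤ t := by
    filter_upwards [hξ1] with ω h1
    simpa using pow_le_pow_of_le_one ht0 ht1 h1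
  simpa using integral_mono_ae (integrable_pow_comp hξ (abs_le.mpr ⟨by linarith, ht1⟩))
    (integrable_const t) hle

lemma integral_binomProbGeTwo (hξ : Measurable ξ) (hα0 : 0 ≤ α) (hα1 : α ≤ 1) :
    ∫ ω, binomProbGeTwo α (ξ ω) ∂μ
      = 1 - ∫ ω, (1 - α) ^ ξ ω ∂μ - ∫ ω, (ξ ω : ℝ) * α * (1 - α) ^ (ξ ω - 1) ∂μ := by
  have h0 : Integrable (fun ω => (1 - α) ^ ξ ω) μ :=
    integrable_pow_comp hξ (abs_le.mpr ⟨by linarith, by linarith⟩)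
  have h01 : Integrable (fun ω => 1 - (1 - α) ^ ξ ω) μ := (integrable_const 1).sub h0
  simp only [binomProbGeTwo]
  rw [integral_sub h01 (integrable_natCast_mul_mul_pow_pred hξ hα0 hα1),
    integral_sub (integrable_const 1) h0]
  simp

lemma integral_binomProbGeTwo_pos (hξ : Measurable ξ) (hα0 : 0 < α) (hα1 : α ≤ 1)
    (hsup : 1 < α * ∫ ω, (ξ ω : ℝ) ∂μ) :
    0 < ∫ ω, binomProbGeTwo α (ξ ω) ∂μ := by
  have hnn : 0 ≤ᵐ[μ] fun ω => binomProbGeTwo α (ξ ω) :=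
    ae_of_all _ fun ω => binomProbGeTwo_nonneg hα1 (ξ ω)
  refine (integral_nonneg_of_ae hnn).lt_of_ne fun h => ?_
  have hle_one : ∀ᵐ ω ∂μ, (ξ ω : ℝ) ≤ 1 := by
    filter_upwards [(integral_eq_zero_iff_of_nonneg_ae hnn
      (integrable_binomProbGeTwo hξ hα0.le hα1)).mp h.symm] with ω hω
    by_contra! h2
    have := sq_le_binomProbGeTwo hα1 (k := ξ ω) (by exact_mod_cast h2)
    have : 0 < α ^ 2 := by positivity
    simp only [Pi.zero_apply] at hω
    linarith
  have : ∫ ω, (ξ ω : ℝ) ∂μ ≤ 1 := by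
    simpa using integral_mono_of_nonneg (ae_of_all _ fun ω => Nat.cast_nonneg (ξ ω))
      (integrable_const 1) hle_one
  nlinarith

lemma integral_pow_le_binom_quadratic (hξ : Measurable ξ) (hα0 : 0 ≤ α) (hα1 : α ≤ 1)
    {x : ℝ} (hx0 : 0 ≤ x) (hx1 : x ≤ 1) :
    ∫ ω, (1 - α + α * x) ^ ξ ω ∂μ
      ≤ ∫ ω, (1 - α) ^ ξ ω ∂μ + (∫ ω, (ξ ω : ℝ) * α * (1 - α) ^ (ξ ω - 1) ∂μ) * x
        + (∫ ω, binomProbGeTwo α (ξ ω) ∂μ) * x ^ 2 := by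
  have h0 : Integrable (fun ω => (1 - α) ^ ξ ω) μ :=
    integrable_pow_comp hξ (abs_le.mpr ⟨by linarith, by linarith⟩)
  have h1 : Integrable (fun ω => (ξ ω : ℝ) * α * (1 - α) ^ (ξ ω - 1) * x) μ :=
    (integrable_natCast_mul_mul_pow_pred hξ hα0 hα1).mul_const x
  have h01 : Integrable (fun ω => (1 - α) ^ ξ ω + (ξ ω : ℝ) * α * (1 - α) ^ (ξ ω - 1) * x) μ :=
    h0.add h1
  have h2 := (integrable_binomProbGeTwo (μ := μ) hξ hα0 hα1).mul_const (x ^ 2)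
  calc ∫ ω, (1 - α + α * x) ^ ξ ω ∂μ
      ≤ ∫ ω, ((1 - α) ^ ξ ω + (ξ ω : ℝ) * α * (1 - α) ^ (ξ ω - 1) * x
          + binomProbGeTwo α (ξ ω) * x ^ 2) ∂μ :=
        integral_mono (integrable_pow_comp hξ (abs_le.mpr ⟨by nlinarith, by nlinarith⟩))
          (h01.add h2) fun ω => pow_le_binom_quadratic hα0 hα1 hx0 hx1 (ξ ω)
    _ = _ := by
      rw [integral_add h01 h2, integral_add h0 h1, integral_mul_const, integral_mul_const]

end NatRandomVariable

theorem extinction_prob_binomial_mixture_bound_general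
    {Ω : Type*} [MeasurableSpace Ω] (μ : Measure Ω) [IsProbabilityMeasure μ]
    (ξ : Ω → ℕ) (hmeas : Measurable ξ) (hξ1 : ∀ᵐ ω ∂μ, 1 ≤ ξ ω)
    (α : ℝ) (hα : α ∈ Ioo (0:ℝ) 1)
    (hsup : 1 < α * ∫ ω, (ξ ω : ℝ) ∂μ) :
    sInf {x ∈ Icc (0:ℝ) 1 | (∫ ω, ((1 - α) + α * x) ^ (ξ ω) ∂μ) = x}
      ≤ (1 - α) /
        (1 - (∫ ω, (1 - α) ^ (ξ ω) ∂μ)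
           - ∫ ω, (ξ ω : ℝ) * α * (1 - α) ^ (ξ ω - 1) ∂μ) := by
  obtain ⟨hα0, hα1⟩ := hα
  set p₀ := ∫ ω, (1 - α) ^ ξ ω ∂μ
  set p₁ := ∫ ω, (ξ ω : ℝ) * α * (1 - α) ^ (ξ ω - 1) ∂μ
  have hβ : 0 < 1 - p₀ - p₁ := integral_binomProbGeTwo (μ := μ) hmeas hα0.le hα1.le ▸
    integral_binomProbGeTwo_pos hmeas hα0 hα1.le hsup
  have hp₀ : p₀ ≤ 1 - α := integral_pow_le_of_one_le hmeas hξ1 (by linarith) (by linarith)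
  have hF : ContinuousOn (fun x : ℝ => ∫ ω, ((1 - α) + α * x) ^ (ξ ω) ∂μ) (Icc 0 1) :=
    (continuousOn_integral_pow hmeas).comp (by fun_prop)
      fun x hx => ⟨by nlinarith [hx.1], by nlinarith [hx.2]⟩
  have hF0 : 0 ≤ ∫ ω, ((1 - α) + α * 0) ^ (ξ ω) ∂μ :=
    integral_nonneg fun ω => pow_nonneg (by linarith) _
  set B := (1 - α) / (1 - p₀ - p₁)
  have hB0 : 0 ≤ B := div_nonneg (by linarith) hβ.le
  rcases le_or_gt 1 B with hB1 | hB1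
  · exact (sInf_fixedPoints_le_of_map_le hF hF0 zero_le_one le_rfl (by simp)).trans hB1
  refine sInf_fixedPoints_le_of_map_le hF hF0 hB0 hB1.le ?_
  have hβB : (1 - p₀ - p₁) * B = 1 - α := mul_div_cancel₀ _ hβ.ne'
  calc ∫ ω, ((1 - α) + α * B) ^ (ξ ω) ∂μ ≤ p₀ + p₁ * B + (1 - p₀ - p₁) * B ^ 2 :=
        integral_binomProbGeTwo (μ := μ) hmeas hα0.le hα1.le ▸
          integral_pow_le_binom_quadratic hmeas hα0.le hα1.le hB0 hB1.le
    _ = B + (1 - B) * (p₀ - (1 - α)) := by linear_combination (B - 1) * hβB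
    _ ≤ B := by nlinarith

/-- Let `ξ ≥ 1` be an integer random variable, `α ∈ (0,1)` with `α·E[ξ] > 1`, and let the
offspring distribution `ζ` be `Bin(ξ, α)`. The generating function of `ζ` is
`x ↦ E[((1-α) + αx)^ξ]`, and the extinction probability `q` of the associated
Galton–Watson process (the smallest fixed point of this generating function in `[0,1]`)
satisfies `q ≤ (1-α)/(1 - E[(1-α)^ξ] - E[ξ α (1-α)^(ξ-1)])`. -/
theorem extinction_prob_binomial_mixture_bound
    {Ω : Type*} [MeasurableSpace Ω] (μ : Measure Ω) [IsProbabilityMeasure μ]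
    (ξ : Ω → ℕ) (hmeas : Measurable ξ) (hξ1 : ∀ᵐ ω ∂μ, 1 ≤ ξ ω)
    (hint : Integrable (fun ω => (ξ ω : ℝ)) μ)
    (α : ℝ) (hα : α ∈ Ioo (0:ℝ) 1)
    (hsup : 1 < α * ∫ ω, (ξ ω : ℝ) ∂μ) :
    sInf {x ∈ Icc (0:ℝ) 1 | (∫ ω, ((1 - α) + α * x) ^ (ξ ω) ∂μ) = x}
      ≤ (1 - α) /
        (1 - (∫ ω, (1 - α) ^ (ξ ω) ∂μ)
           - ∫ ω, (ξ ω : ℝ) * α * (1 - α) ^ (ξ ω - 1) ∂μ) :=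
  extinction_prob_binomial_mixture_bound_general μ ξ hmeas hξ1 α hα hsup
end

section
/- Under the uniform point model: if r_n ≥ γ √(log n / n), the torus is partitioned into (mkd)² boxes of side r_n'/(2d) with r_n' ≥ r_n/√2, then the probability that some box has point count outside [(1-δ) n r_n'²/(4d²), (1+δ) n r_n'²/(4d²)] is at most 2 (mkd)² n^{-γ²δ²/(24 d²)}; in particular if γ² δ² > 24 d² (1 + o(1) margin, e.g. γ² δ² ≥ 48 d²) this probability tends to 0 as n → ∞. -/
/-!
A box of side `r'/(2d)` has area `1/M² = r'²/(4d²)`, so its count is a sum of `n` independent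
indicators with mean `n r'²/(4d²) ≥ γ² log n/(8d²)`. The multiplicative Chernoff bound, proved
from the moment generating function of the sum, puts each box outside the `δ`-window with
probability at most `2 exp(-δ² · mean/3) ≤ 2 n^(-γ²δ²/(24d²))`; a union bound over the `M²`
boxes gives the estimate. Since `M = O(√n)`, once the exponent is at most `-2` the bound is
`O(1/n)`.
-/

open MeasureTheory Set Filter

/-- The box indexed by `p` in the partition of the unit square `[0,1)²` into `b²`
congruent squares of side `1/b`. -/
def unitBox (b : ℕ) (p : Fin b × Fin b) : Set (ℝ × ℝ) :=
  Ico ((p.1 : ℝ) / b) (((p.1 : ℝ) + 1) / b) ×ˢ Ico ((p.2 : ℝ) / b) (((p.2 : ℝ) + 1) / b)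

open ProbabilityTheory Real

section UnitBox

variable (b : ℕ) (p : Fin b × Fin b)

lemma measurableSet_unitBox : MeasurableSet (unitBox b p) :=
  measurableSet_Ico.prod measurableSet_Ico

lemma unitBox_subset_Icc : unitBox b p ⊆ Icc (0 : ℝ) 1 ×ˢ Icc (0 : ℝ) 1 := by
  have hb : (0 : ℝ) < b := by exact_mod_cast p.1.pos
  have hcoord (j : Fin b) : Ico ((j : ℝ) / b) ((j + 1) / b) ⊆ Icc 0 1 := by
    refine Ico_subset_Icc_self.trans (Icc_subset_Icc (by positivity) ?_)
    rw [div_le_one hb]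
    exact_mod_cast j.isLt
  exact prod_mono (hcoord p.1) (hcoord p.2)

lemma measureReal_unitBox : volume.real (unitBox b p) = 1 / b ^ 2 := by
  have hside (j : Fin b) : ((j : ℝ) + 1) / b - j / b = 1 / b := by ring
  rw [unitBox, measureReal_def, Measure.volume_eq_prod, Measure.prod_prod, Real.volume_Ico,
    Real.volume_Ico, hside, hside, ← ENNReal.ofReal_mul (by positivity),
    ENNReal.toReal_ofReal (by positivity)]
  ring

variable {Ω : Type*} [MeasurableSpace Ω] {μ : Measure Ω} {X : Ω → ℝ × ℝ}

lemma measureReal_preimage_unitBox (hX : Measurable X)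
    (hdist : μ.map X = volume.restrict (Icc (0 : ℝ) 1 ×ˢ Icc (0 : ℝ) 1)) :
    μ.real (X ⁻¹' unitBox b p) = 1 / b ^ 2 := by
  rw [← map_measureReal_apply hX (measurableSet_unitBox b p), hdist,
    measureReal_restrict_apply (measurableSet_unitBox b p),
    inter_eq_self_of_subset_left (unitBox_subset_Icc b p), measureReal_unitBox]

end UnitBox

lemma natCard_setOf_mem_eq_sum_indicator {ι Ω : Type*} [Fintype ι] (A : ι → Set Ω) (ω : Ω) :
    (Nat.card {i | ω ∈ A i} : ℝ) = ∑ i, (A i).indicator 1 ω := by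
  classical
  rw [Nat.card_eq_fintype_card, Fintype.card_subtype]
  simp [Set.indicator_apply, Finset.sum_boole]

/-- `13 / 18 = 1 / 2 + 2 / 9`: the remainder bound of `Real.exp_bound` at order `3` is
`2 / 9 * |x| ^ 3 ≤ 2 / 9 * x ^ 2`. -/
lemma Real.exp_le_one_add_add_mul_sq {x : ℝ} (hx : |x| ≤ 1) :
    exp x ≤ 1 + x + 13 / 18 * x ^ 2 := by
  have h := (abs_le.mp (Real.exp_bound hx (n := 3) (by norm_num))).2
  have hcube : |x| ^ 3 ≤ x ^ 2 := by
    simpa [sq_abs] using pow_le_pow_of_le_one (abs_nonneg x) hx (by norm_num : 2 ≤ 3)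
  norm_num [Finset.sum_range_succ, Nat.factorial] at h
  nlinarith

lemma exp_mul_indicator_one {Ω : Type*} (A : Set Ω) (t : ℝ) (ω : Ω) :
    exp (t * A.indicator 1 ω) = 1 + (exp t - 1) * A.indicator 1 ω := by
  by_cases h : ω ∈ A <;> simp [h]

section Chernoff

variable {Ω ι : Type*} [MeasurableSpace Ω] {μ : Measure Ω} [IsProbabilityMeasure μ]
  {A : Set Ω}

lemma integrable_exp_mul_indicator_one (hA : MeasurableSet A) (t : ℝ) :
    Integrable (fun ω => exp (t * A.indicator 1 ω)) μ := by
  simp_rw [exp_mul_indicator_one]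
  exact (integrable_const 1).add (((integrable_const 1).indicator hA).const_mul _)

lemma mgf_indicator_one (hA : MeasurableSet A) (t : ℝ) :
    mgf (A.indicator 1) μ t = 1 + (exp t - 1) * μ.real A := by
  rw [mgf]
  simp_rw [exp_mul_indicator_one]
  rw [integral_add (integrable_const 1) (((integrable_const 1).indicator hA).const_mul _),
    integral_const_mul, integral_indicator_one hA]
  simp

variable [Fintype ι] {A : ι → Set Ω} {m : ℝ}

lemma mgf_sum_indicator_one_le (hA : ∀ i, MeasurableSet (A i))
    (hindep : iIndepFun (fun i => (A i).indicator (1 : Ω → ℝ)) μ)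
    (hm : ∑ i, μ.real (A i) = m) (t : ℝ) :
    mgf (∑ i, (A i).indicator 1) μ t ≤ exp (m * (exp t - 1)) := by
  rw [hindep.mgf_sum (fun i => measurable_one.indicator (hA i)), ← hm, Finset.sum_mul,
    exp_sum]
  refine Finset.prod_le_prod (fun i _ => mgf_nonneg) fun i _ => ?_
  rw [mgf_indicator_one (hA i)]
  linarith [add_one_le_exp (μ.real (A i) * (exp t - 1))]

lemma integrable_exp_mul_sum_indicator_one (hA : ∀ i, MeasurableSet (A i))
    (hindep : iIndepFun (fun i => (A i).indicator (1 : Ω → ℝ)) μ) (t : ℝ) :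
    Integrable (fun ω => exp (t * (∑ i, (A i).indicator 1) ω)) μ :=
  hindep.integrable_exp_mul_sum (fun i => measurable_one.indicator (hA i))
    fun i _ => integrable_exp_mul_indicator_one (hA i) t

lemma measureReal_sum_indicator_one_ge_le (hA : ∀ i, MeasurableSet (A i))
    (hindep : iIndepFun (fun i => (A i).indicator (1 : Ω → ℝ)) μ)
    (hm : ∑ i, μ.real (A i) = m) {t : ℝ} (ht : 0 ≤ t) (ε : ℝ) :
    μ.real {ω | ε ≤ ∑ i, (A i).indicator 1 ω} ≤ exp (-t * ε + m * (exp t - 1)) := by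
  have h := measure_ge_le_exp_mul_mgf ε ht (integrable_exp_mul_sum_indicator_one hA hindep t)
  simp only [Finset.sum_apply] at h
  rw [exp_add]
  exact h.trans (by gcongr; exact mgf_sum_indicator_one_le hA hindep hm t)

lemma measureReal_sum_indicator_one_le_le (hA : ∀ i, MeasurableSet (A i))
    (hindep : iIndepFun (fun i => (A i).indicator (1 : Ω → ℝ)) μ)
    (hm : ∑ i, μ.real (A i) = m) {t : ℝ} (ht : t ≤ 0) (ε : ℝ) :
    μ.real {ω | ∑ i, (A i).indicator 1 ω ≤ ε} ≤ exp (-t * ε + m * (exp t - 1)) := by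
  have h := measure_le_le_exp_mul_mgf ε ht (integrable_exp_mul_sum_indicator_one hA hindep t)
  simp only [Finset.sum_apply] at h
  rw [exp_add]
  exact h.trans (by gcongr; exact mgf_sum_indicator_one_le hA hindep hm t)

/-- At `t = ± 3δ/5` the quadratic bound on `exp` makes both Chernoff exponents at most
`-(17/50) δ² m ≤ -δ² m / 3`. -/
theorem measureReal_sum_indicator_one_notMem_Icc_le (hA : ∀ i, MeasurableSet (A i))
    (hindep : iIndepFun (fun i => (A i).indicator (1 : Ω → ℝ)) μ)
    (hm : ∑ i, μ.real (A i) = m) {δ : ℝ} (hδ0 : 0 ≤ δ) (hδ1 : δ ≤ 1) :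
    μ.real {ω | ∑ i, (A i).indicator 1 ω ∉ Icc ((1 - δ) * m) ((1 + δ) * m)}
      ≤ 2 * exp (-(δ ^ 2 * m / 3)) := by
  have hm0 : 0 ≤ m := hm ▸ Finset.sum_nonneg fun i _ => measureReal_nonneg
  have ht : |3 / 5 * δ| ≤ 1 := by rw [abs_of_nonneg (by positivity)]; linarith
  have hexp_pos := mul_le_mul_of_nonneg_left (exp_le_one_add_add_mul_sq ht) hm0
  have hexp_neg := mul_le_mul_of_nonneg_left
    (exp_le_one_add_add_mul_sq (x := -(3 / 5 * δ)) (by rwa [abs_neg])) hm0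
  have hmδ : 0 ≤ m * δ ^ 2 := by positivity
  have hlower := measureReal_sum_indicator_one_le_le hA hindep hm (t := -(3 / 5 * δ))
    (by linarith) ((1 - δ) * m)
  have hupper := measureReal_sum_indicator_one_ge_le hA hindep hm (t := 3 / 5 * δ)
    (by positivity) ((1 + δ) * m)
  calc _ ≤ μ.real ({ω | ∑ i, (A i).indicator 1 ω ≤ (1 - δ) * m}
          ∪ {ω | (1 + δ) * m ≤ ∑ i, (A i).indicator 1 ω}) := by
        refine measureReal_mono fun ω hω => ?_
        simp only [mem_ofPred_eq, mem_Icc, not_and_or, not_le] at hω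
        exact hω.imp le_of_lt le_of_lt
    _ ≤ exp (-(δ ^ 2 * m / 3)) + exp (-(δ ^ 2 * m / 3)) := by
        refine (measureReal_union_le _ _).trans (add_le_add ?_ ?_)
        · exact hlower.trans (exp_le_exp.2 (by nlinarith))
        · exact hupper.trans (exp_le_exp.2 (by nlinarith))
    _ = 2 * exp (-(δ ^ 2 * m / 3)) := by ring

end Chernoff

theorem measure_exists_unitBox_count_notMem_Icc_le {Ω : Type*} [MeasurableSpace Ω]
    {μ : Measure Ω} [IsProbabilityMeasure μ] {n b : ℕ} {X : Fin n → Ω → ℝ × ℝ}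
    (hmeas : ∀ i, Measurable (X i)) (hindep : iIndepFun X μ)
    (hdist : ∀ i, μ.map (X i) = volume.restrict (Icc (0 : ℝ) 1 ×ˢ Icc (0 : ℝ) 1))
    {δ : ℝ} (hδ0 : 0 ≤ δ) (hδ1 : δ ≤ 1) :
    μ {ω | ∃ p : Fin b × Fin b, (Nat.card {i | X i ω ∈ unitBox b p} : ℝ)
        ∉ Icc ((1 - δ) * (n / b ^ 2)) ((1 + δ) * (n / b ^ 2))}
      ≤ ENNReal.ofReal (2 * b ^ 2 * exp (-(δ ^ 2 * (n / b ^ 2) / 3))) := by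
  have hbox (p : Fin b × Fin b) :
      μ.real {ω | ∑ i, (X i ⁻¹' unitBox b p).indicator 1 ω
          ∉ Icc ((1 - δ) * (n / b ^ 2)) ((1 + δ) * (n / b ^ 2))}
        ≤ 2 * exp (-(δ ^ 2 * (n / b ^ 2) / 3)) := by
    refine measureReal_sum_indicator_one_notMem_Icc_le
      (fun i => hmeas i (measurableSet_unitBox b p))
      (hindep.comp _ fun _ => measurable_one.indicator (measurableSet_unitBox b p)) ?_ hδ0 hδ1
    simp [measureReal_preimage_unitBox b p (hmeas _) (hdist _), div_eq_mul_inv]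
  have hunion : {ω | ∃ p : Fin b × Fin b, (Nat.card {i | X i ω ∈ unitBox b p} : ℝ)
        ∉ Icc ((1 - δ) * (n / b ^ 2)) ((1 + δ) * (n / b ^ 2))}
      = ⋃ p, {ω | ∑ i, (X i ⁻¹' unitBox b p).indicator 1 ω
          ∉ Icc ((1 - δ) * (n / b ^ 2)) ((1 + δ) * (n / b ^ 2))} := by
    ext ω
    simp only [mem_ofPred_eq, mem_iUnion, ← natCard_setOf_mem_eq_sum_indicator, mem_preimage]
  rw [hunion, ← ofReal_measureReal]
  refine ENNReal.ofReal_le_ofReal ((measureReal_iUnion_fintype_le _).trans ?_)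
  refine (Finset.sum_le_sum fun p _ => hbox p).trans_eq ?_
  simp only [Finset.sum_const, Finset.card_univ, Fintype.card_prod, Fintype.card_fin]
  ring

lemma sq_mul_log_le_two_mul_sq {γ r r' : ℝ} {n : ℕ} (hγ : 0 ≤ γ)
    (hr : γ * √(log n / n) ≤ r) (hrr' : r / √2 ≤ r') :
    γ ^ 2 * log n ≤ 2 * n * r' ^ 2 := by
  rcases n.eq_zero_or_pos with rfl | hn
  · simp
  have hn' : (0 : ℝ) < n := by exact_mod_cast hn
  have hr_sq := pow_le_pow_left₀ (by positivity) hr 2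
  rw [mul_pow, sq_sqrt (div_nonneg (log_natCast_nonneg n) hn'.le)] at hr_sq
  have hr'_sq := pow_le_pow_left₀ (div_nonneg ((by positivity : 0 ≤ γ * _).trans hr)
    (sqrt_nonneg 2)) hrr' 2
  rw [div_pow, sq_sqrt zero_le_two] at hr'_sq
  calc γ ^ 2 * log n = n * (γ ^ 2 * (log n / n)) := by field_simp
    _ ≤ n * r ^ 2 := by gcongr
    _ ≤ 2 * n * r' ^ 2 := by nlinarith

lemma exp_neg_le_rpow {n : ℕ} (hn : 0 < n) {d : ℕ} (hd : 0 < d) {γ δ x : ℝ}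
    (hx : γ ^ 2 * log n ≤ 8 * d ^ 2 * x) :
    exp (-(δ ^ 2 * x / 3)) ≤ (n : ℝ) ^ (-(γ ^ 2 * δ ^ 2) / (24 * (d : ℝ) ^ 2)) := by
  rw [rpow_def_of_pos (by exact_mod_cast hn), exp_le_exp]
  have hd' : (0 : ℝ) < d := by exact_mod_cast hd
  have := mul_le_mul_of_nonneg_left hx (sq_nonneg δ)
  rw [mul_div_assoc', le_div_iff₀ (by positivity)]
  nlinarith

lemma div_sqrt_le_of_mul_sqrt_log_div_le {γ r : ℝ} {n : ℕ} (hn : 3 ≤ n) (hγ : 0 ≤ γ)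
    (hr : γ * √(log n / n) ≤ r) : γ / √n ≤ r := by
  have hn' : (3 : ℝ) ≤ n := by exact_mod_cast hn
  have hlog : 1 ≤ log n := by
    rw [le_log_iff_exp_le (by positivity)]
    linarith [exp_one_lt_d9]
  refine le_trans ?_ hr
  rw [div_eq_mul_inv, ← sqrt_inv, inv_eq_one_div]
  gcongr

lemma natCeil_two_div_mul_le {k d : ℕ} (hk : 0 < k) {γ r s : ℝ} (hγ : 0 < γ) (hr : 0 < r)
    (hs : 1 ≤ s) (hγr : γ / s ≤ r) :
    (⌈2 / (k * r)⌉₊ * k * d : ℝ) ≤ (2 * d / γ + k * d) * s := by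
  have hk' : (0 : ℝ) < k := by exact_mod_cast hk
  calc (⌈2 / (k * r)⌉₊ * k * d : ℝ) ≤ (2 / (k * r) + 1) * k * d := by
        gcongr; exact (Nat.ceil_lt_add_one (by positivity)).le
    _ = 2 * d / r + k * d := by field_simp
    _ ≤ 2 * d / (γ / s) + k * d * s :=
        add_le_add (by gcongr) (le_mul_of_one_le_right (by positivity) hs)
    _ = (2 * d / γ + k * d) * s := by field_simp

lemma tendsto_sq_mul_rpow_of_le_mul_sqrt {f : ℕ → ℝ} {C e : ℝ} (he : e ≤ -2)
    (hf : ∀ᶠ n in atTop, 0 ≤ f n ∧ f n ≤ C * √n) :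
    Tendsto (fun n : ℕ => f n ^ 2 * (n : ℝ) ^ e) atTop (nhds 0) := by
  refine squeeze_zero' ?_ ?_ (tendsto_const_div_atTop_nhds_zero_nat (C ^ 2))
  · exact Eventually.of_forall fun n => mul_nonneg (sq_nonneg _) (rpow_nonneg n.cast_nonneg _)
  filter_upwards [hf, eventually_ge_atTop 1] with n ⟨hf0, hfC⟩ hn
  have hn' : (1 : ℝ) ≤ n := by exact_mod_cast hn
  calc f n ^ 2 * (n : ℝ) ^ e ≤ (C * √n) ^ 2 * (n : ℝ) ^ (-2 : ℝ) := by
        gcongr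
    _ = C ^ 2 / n := by
        rw [mul_pow, sq_sqrt (by positivity), rpow_neg (by positivity), rpow_two]
        field_simp

/-- Uniform point model with `r_n ≥ γ √(log n / n)`: the torus is partitioned into
`(mkd)²` boxes of side `r_n'/(2d)` (where `m = ⌈2/(k r_n)⌉`, `r_n' = 2/(km)`, and
`r_n' ≥ r_n/√2`). The probability that some box has point count outside
`[(1-δ) n r_n'²/(4d²), (1+δ) n r_n'²/(4d²)]` is at most
`2 (mkd)² n^(-γ²δ²/(24d²))`; in particular if `γ²δ² ≥ 48 d²` this probability tends
to `0` as `n → ∞`. -/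
theorem all_cells_delta_good
    {Ω : Type*} [MeasurableSpace Ω] (μ : Measure Ω) [IsProbabilityMeasure μ]
    (k d : ℕ) (hk : 0 < k) (hd : 0 < d) (γ δ : ℝ) (hγ : 0 < γ) (hδ : δ ∈ Ioo (0:ℝ) 1)
    (r : ℕ → ℝ) (hrpos : ∀ n, 0 < r n)
    (hr : ∀ n : ℕ, γ * Real.sqrt (Real.log n / n) ≤ r n)
    (X : (n : ℕ) → Fin n → Ω → ℝ × ℝ)
    (hmeas : ∀ n i, Measurable (X n i))
    (hindep : ∀ n, ProbabilityTheory.iIndepFun (X n) μ)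
    (hdist : ∀ n i, μ.map (X n i) = volume.restrict (Icc (0:ℝ) 1 ×ˢ Icc (0:ℝ) 1))
    (M : ℕ → ℕ) (hM : ∀ n, M n = ⌈2 / ((k : ℝ) * r n)⌉₊ * k * d)
    (r' : ℕ → ℝ) (hr' : ∀ n, r' n = 2 / ((k : ℝ) * (⌈2 / ((k : ℝ) * r n)⌉₊ : ℝ)))
    (hrr' : ∀ n, r n / Real.sqrt 2 ≤ r' n)
    (bad : ℕ → Set Ω)
    (hbad : ∀ n, bad n = {ω | ∃ p : Fin (M n) × Fin (M n),
        ¬((1 - δ) * n * (r' n) ^ 2 / (4 * (d : ℝ) ^ 2)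
            ≤ (Nat.card {i : Fin n | X n i ω ∈ unitBox (M n) p} : ℝ)
          ∧ (Nat.card {i : Fin n | X n i ω ∈ unitBox (M n) p} : ℝ)
            ≤ (1 + δ) * n * (r' n) ^ 2 / (4 * (d : ℝ) ^ 2))}) :
    (∀ n : ℕ, μ (bad n)
        ≤ ENNReal.ofReal (2 * ((M n : ℝ)) ^ 2
            * (n : ℝ) ^ (-(γ ^ 2 * δ ^ 2) / (24 * (d : ℝ) ^ 2))))
    ∧ (48 * (d : ℝ) ^ 2 ≤ γ ^ 2 * δ ^ 2 →
        Tendsto (fun n => μ (bad n)) atTop (nhds 0)) := by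
  obtain ⟨hδ0, hδ1⟩ := hδ
  have hbound (n : ℕ) : μ (bad n) ≤ ENNReal.ofReal (2 * ((M n : ℝ)) ^ 2
      * (n : ℝ) ^ (-(γ ^ 2 * δ ^ 2) / (24 * (d : ℝ) ^ 2))) := by
    rcases n.eq_zero_or_pos with rfl | hn
    · simp [hbad]
    have hside : r' n ^ 2 / (4 * (d : ℝ) ^ 2) = 1 / (M n : ℝ) ^ 2 := by
      rw [hr', hM]; push_cast; ring
    have hbad' : bad n = {ω | ∃ p : Fin (M n) × Fin (M n),
        (Nat.card {i | X n i ω ∈ unitBox (M n) p} : ℝ)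
          ∉ Icc ((1 - δ) * (n / (M n : ℝ) ^ 2)) ((1 + δ) * (n / (M n : ℝ) ^ 2))} := by
      simp only [hbad n, mul_assoc, mul_div_assoc, hside, mul_one_div, mem_Icc]
    rw [hbad']
    refine (measure_exists_unitBox_count_notMem_Icc_le (hmeas n) (hindep n) (hdist n)
      hδ0.le hδ1.le).trans (ENNReal.ofReal_le_ofReal ?_)
    gcongr
    refine exp_neg_le_rpow hn hd ((sq_mul_log_le_two_mul_sq hγ.le (hr n) (hrr' n)).trans_eq ?_)
    rw [div_eq_mul_one_div, ← hside]
    field_simp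
    ring
  refine ⟨hbound, fun hγδ => ?_⟩
  have he : -(γ ^ 2 * δ ^ 2) / (24 * (d : ℝ) ^ 2) ≤ -2 := by
    rw [div_le_iff₀ (by positivity)]; linarith
  have hM_le : ∀ᶠ n in atTop, 0 ≤ (M n : ℝ) ∧ (M n : ℝ) ≤ (2 * d / γ + k * d) * √n := by
    filter_upwards [eventually_ge_atTop 3] with n hn
    refine ⟨by positivity, ?_⟩
    rw [hM]
    push_cast
    exact natCeil_two_div_mul_le hk hγ (hrpos n) (one_le_sqrt.2 (by norm_cast; omega))
      (div_sqrt_le_of_mul_sqrt_log_div_le hn hγ.le (hr n))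
  have hlim := ENNReal.tendsto_ofReal ((tendsto_sq_mul_rpow_of_le_mul_sqrt he hM_le).const_mul 2)
  rw [mul_zero, ENNReal.ofReal_zero] at hlim
  exact tendsto_of_tendsto_of_tendsto_of_le_of_le tendsto_const_nhds hlim (fun _ => zero_le)
    fun n => (hbound n).trans_eq (by rw [mul_assoc])
end
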